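/- Let f be a continuous map on a compact metric space and (U_k) a sequence of finite open covers with diam(U_k) → 0. Then h_L^+(f, U_k) → h_L^+(f) and h_L^-(f, U_k) → h_L^-(f) as k → ∞. -/

import Mathlib

open Set Filter Topology Metric
open scoped ENNReal

/-- `U` is an open cover of `X`: a family of open sets whose union is `X`. -/
def IsOpenCover {X : Type*} [MetricSpace X] (U : Set (Set X)) : Prop :=
  (∀ A ∈ U, IsOpen A) ∧ ⋃₀ U = Set.univ

/-- The Lebesgue number of a cover `U`: the largest `δ` such that every open
ball of radius `δ` is contained in some element of `U`. -/
noncomputable def leb {X : Type*} [MetricSpace X] (U : Set (Set X)) : ℝ≥0∞ :=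
  sSup {δ : ℝ≥0∞ | ∀ x : X, ∃ A ∈ U, EMetric.ball x δ ⊆ A}

/-- The cover `{g⁻¹(A) : A ∈ U}`. -/
def preCov {X : Type*} (g : X → X) (U : Set (Set X)) : Set (Set X) :=
  (fun A => g ⁻¹' A) '' U

/-- The join `U ∨ V = {A ∩ B : A ∈ U, B ∈ V}` of two covers. -/
def covJoin {X : Type*} (U V : Set (Set X)) : Set (Set X) :=
  {S | ∃ A ∈ U, ∃ B ∈ V, S = A ∩ B}

/-- The cover `U_f^n = ⋁_{k=0}^{n-1} f^{-k}(U)`. -/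
def covSeq {X : Type*} (f : X → X) (U : Set (Set X)) (n : ℕ) : Set (Set X) :=
  {S | ∃ g : Fin n → Set X, (∀ k, g k ∈ U) ∧ S = ⋂ k : Fin n, (f^[(k : ℕ)]) ⁻¹' g k}

/-- `δ_n(f,U)`, the Lebesgue number of `U_f^n`. -/
noncomputable def lebN {X : Type*} [MetricSpace X] (f : X → X) (U : Set (Set X)) (n : ℕ) : ℝ≥0∞ :=
  leb (covSeq f U n)

/-- `h_L^+(f,U) = limsup_n -(1/n) log δ_n(f,U)`. -/
noncomputable def hLplus {X : Type*} [MetricSpace X] (f : X → X) (U : Set (Set X)) : EReal :=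
  Filter.limsup (fun n : ℕ => ((-Real.log ((lebN f U n).toReal) / n : ℝ) : EReal)) atTop

/-- `h_L^-(f,U) = liminf_n -(1/n) log δ_n(f,U)`. -/
noncomputable def hLminus {X : Type*} [MetricSpace X] (f : X → X) (U : Set (Set X)) : EReal :=
  Filter.liminf (fun n : ℕ => ((-Real.log ((lebN f U n).toReal) / n : ℝ) : EReal)) atTop

/-- `h_L^+(f)`: supremum over finite open covers. -/
noncomputable def hLplusSup {X : Type*} [MetricSpace X] (f : X → X) : EReal :=
  ⨆ (U : Set (Set X)) (_ : IsOpenCover U ∧ U.Finite), hLplus f U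

/-- `h_L^-(f)`: supremum over finite open covers. -/
noncomputable def hLminusSup {X : Type*} [MetricSpace X] (f : X → X) : EReal :=
  ⨆ (U : Set (Set X)) (_ : IsOpenCover U ∧ U.Finite), hLminus f U

/-- The diameter of a cover: supremum of diameters of its elements. -/
noncomputable def covDiam {X : Type*} [MetricSpace X] (U : Set (Set X)) : ℝ≥0∞ :=
  ⨆ A ∈ U, EMetric.diam A

/-- `U` refines `V`: every element of `U` is contained in some element of `V`. -/
def Refines {X : Type*} (U V : Set (Set X)) : Prop :=
  ∀ A ∈ U, ∃ B ∈ V, A ⊆ B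

/-- `N(γ)`: the minimal number of open `γ`-balls needed to cover `X`. -/
noncomputable def covN (X : Type*) [MetricSpace X] (γ : ℝ≥0∞) : ℕ :=
  sInf {n : ℕ | ∃ s : Finset X, s.card = n ∧ ⋃ x ∈ s, EMetric.ball x γ = Set.univ}

/-- `S(U)`: the smallest cardinality of a subcover of `U`. -/
noncomputable def covS {X : Type*} [MetricSpace X] (U : Set (Set X)) : ℕ :=
  sInf {m : ℕ | ∃ W ⊆ U, ⋃₀ W = Set.univ ∧ W.ncard = m}

/-- `s_n(f,ε)`: maximal cardinality of an `(n,ε)`-separated set. -/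
noncomputable def sep {X : Type*} [MetricSpace X] (f : X → X) (n : ℕ) (ε : ℝ) : ℕ :=
  sSup {m : ℕ | ∃ E : Finset X, E.card = m ∧
    ∀ x ∈ E, ∀ y ∈ E, x ≠ y → ∃ k < n, ε < dist (f^[k] x) (f^[k] y)}

/-- Topological entropy via `(n,ε)`-separated sets. -/
noncomputable def topEnt {X : Type*} [MetricSpace X] (f : X → X) : EReal :=
  ⨆ (ε : ℝ) (_ : 0 < ε),
    Filter.limsup (fun n : ℕ => ((Real.log (sep f n ε) / n : ℝ) : EReal)) atTop

/-- Upper box dimension of `X`. -/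
noncomputable def dimB (X : Type*) [MetricSpace X] : EReal :=
  Filter.limsup
    (fun γ : ℝ => ((Real.log (covN X (ENNReal.ofReal γ)) / -Real.log γ : ℝ) : EReal))
    (nhdsWithin (0:ℝ) (Set.Ioi 0))

/-!
If `V` is an open cover of a compact space, every cover of diameter smaller than the Lebesgue
number of `V` refines `V`. Refinement passes to the iterated joins `U_f^n`, decreases their
Lebesgue numbers and therefore increases both `h_L^+` and `h_L^-`. So for every finite open
cover `V`, eventually `h_L^±(f, V) ≤ h_L^±(f, U_k) ≤ h_L^±(f)`.
-/

noncomputable def logRate (a : ℕ → ℝ≥0∞) (n : ℕ) : EReal :=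
  ((-Real.log (a n).toReal / n : ℝ) : EReal)

section LogRate

variable {a b : ℕ → ℝ≥0∞}

lemma logRate_of_forall_eq_top (ha : ∀ n, a n = ∞) : logRate a = fun _ => 0 :=
  funext fun n => by simp [logRate, ha n]

lemma logRate_le_logRate {n : ℕ} (ha : 0 < a n) (hab : a n ≤ b n) (hb : b n ≠ ∞) :
    logRate b n ≤ logRate a n := by
  have hlog : Real.log (a n).toReal ≤ Real.log (b n).toReal :=
    Real.log_le_log (ENNReal.toReal_pos ha.ne' (ne_top_of_le_ne_top hb hab))
      (ENNReal.toReal_mono hb hab)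
  unfold logRate
  gcongr

lemma liminf_logRate_nonneg (ha : Antitone a) (hpos : ∀ n, 0 < a n) :
    0 ≤ liminf (logRate a) atTop := by
  by_cases htop : ∀ n, a n = ∞
  · simp [logRate_of_forall_eq_top htop]
  obtain ⟨N, hN⟩ := not_forall.1 htop
  have hconst : Tendsto (logRate fun _ => a N) atTop (𝓝 0) := by
    have h := (continuous_coe_real_ereal.tendsto 0).comp
      (tendsto_const_div_atTop_nhds_zero_nat (-Real.log (a N).toReal))
    rwa [EReal.coe_zero] at h
  rw [← hconst.liminf_eq]
  refine liminf_le_liminf ?_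
  filter_upwards [eventually_ge_atTop N] with n hn
  exact logRate_le_logRate (hpos n) (ha hn) hN

lemma limsup_logRate_le_and_liminf_logRate_le (ha : Antitone a) (hb : Antitone b)
    (hpos : ∀ n, 0 < a n) (hab : ∀ n, a n ≤ b n) :
    limsup (logRate b) atTop ≤ limsup (logRate a) atTop ∧
      liminf (logRate b) atTop ≤ liminf (logRate a) atTop := by
  -- `(∞).toReal = 0` and `log 0 = 0`, so an infinite Lebesgue number contributes rate `0`.
  by_cases htop : ∀ n, b n = ∞
  · have h0 := liminf_logRate_nonneg ha hpos
    simp only [logRate_of_forall_eq_top htop, limsup_const, liminf_const]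
    exact ⟨h0.trans liminf_le_limsup, h0⟩
  obtain ⟨N, hN⟩ := not_forall.1 htop
  have hle : ∀ᶠ n in atTop, logRate b n ≤ logRate a n := by
    filter_upwards [eventually_ge_atTop N] with n hn
    exact logRate_le_logRate (hpos n) (hab n) (ne_top_of_le_ne_top hN (hb hn))
  exact ⟨limsup_le_limsup hle, liminf_le_liminf hle⟩

end LogRate

section Covers

variable {X : Type*} {f : X → X} {U V W : Set (Set X)}

lemma Refines.covSeq (h : Refines U V) (f : X → X) (n : ℕ) :
    Refines (covSeq f U n) (covSeq f V n) := by
  rintro _ ⟨g, hg, rfl⟩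
  choose g' hg' hsub using fun k => h (g k) (hg k)
  exact ⟨_, ⟨g', hg', rfl⟩, iInter_mono fun k => preimage_mono (hsub k)⟩

lemma covSeq_refines_of_le (f : X → X) (W : Set (Set X)) {m n : ℕ} (h : m ≤ n) :
    Refines (covSeq f W n) (covSeq f W m) := by
  rintro _ ⟨g, hg, rfl⟩
  exact ⟨_, ⟨fun k => g (Fin.castLE h k), fun k => hg _, rfl⟩,
    subset_iInter fun k => iInter_subset _ (Fin.castLE h k)⟩

variable [MetricSpace X]

lemma leb_pos [CompactSpace X] (hW : IsOpenCover W) : 0 < leb W := by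
  obtain ⟨δ, hδ, hball⟩ := lebesgue_number_lemma_of_metric_sUnion isCompact_univ hW.1
    hW.2.ge
  refine (ENNReal.ofReal_pos.2 hδ).trans_le (le_sSup fun x => ?_)
  obtain ⟨A, hA, hsub⟩ := hball x (mem_univ x)
  exact ⟨A, hA, fun y hy => hsub (Metric.mem_ball.2 (edist_lt_ofReal.1 hy))⟩

lemma Refines.leb_le (h : Refines U V) : leb U ≤ leb V := by
  refine sSup_le_sSup fun δ hδ x => ?_
  obtain ⟨A, hA, hball⟩ := hδ x
  obtain ⟨B, hB, hAB⟩ := h A hA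
  exact ⟨B, hB, hball.trans hAB⟩

lemma lebN_antitone (f : X → X) (W : Set (Set X)) : Antitone (lebN f W) :=
  fun _ _ h => (covSeq_refines_of_le f W h).leb_le

lemma IsOpenCover.covSeq (hW : IsOpenCover W) (hf : Continuous f) (n : ℕ) :
    IsOpenCover (covSeq f W n) := by
  refine ⟨?_, eq_univ_of_forall fun x => ?_⟩
  · rintro _ ⟨g, hg, rfl⟩
    exact isOpen_iInter_of_finite fun k => (hW.1 _ (hg k)).preimage (hf.iterate _)
  · have hcov : ∀ k : Fin n, ∃ A ∈ W, f^[k] x ∈ A := fun k =>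
      mem_sUnion.1 (hW.2.symm ▸ mem_univ _)
    choose g hg hx using hcov
    exact ⟨_, ⟨g, hg, rfl⟩, mem_iInter.2 hx⟩

lemma lebN_pos [CompactSpace X] (hW : IsOpenCover W) (hf : Continuous f) (n : ℕ) :
    0 < lebN f W n :=
  leb_pos (hW.covSeq hf n)

lemma lebN_of_isEmpty [IsEmpty X] (f : X → X) (W : Set (Set X)) (n : ℕ) : lebN f W n = ∞ :=
  top_le_iff.1 (le_sSup fun x => isEmptyElim x)

lemma refines_of_covDiam_lt_leb [Nonempty X] (h : covDiam U < leb V) : Refines U V := by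
  obtain ⟨δ, hδV, hδ⟩ := lt_sSup_iff.1 h
  intro A hA
  rcases A.eq_empty_or_nonempty with rfl | ⟨x, hx⟩
  · obtain ⟨B, hB, -⟩ := hδV (Classical.arbitrary X)
    exact ⟨B, hB, empty_subset B⟩
  · obtain ⟨B, hB, hball⟩ := hδV x
    refine ⟨B, hB, fun y hy => hball (Metric.mem_eball.2 ?_)⟩
    calc edist y x ≤ Metric.ediam A := Metric.edist_le_ediam_of_mem hy hx
      _ ≤ covDiam U := le_iSup₂_of_le A hA le_rfl
      _ < δ := hδ

end Covers

section LebesgueEntropy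

variable {X : Type*} [MetricSpace X] {f : X → X} {U V : Set (Set X)}

lemma hLplus_le_and_hLminus_le_of_refines [CompactSpace X] (hf : Continuous f)
    (hU : IsOpenCover U) (h : Refines U V) :
    hLplus f V ≤ hLplus f U ∧ hLminus f V ≤ hLminus f U :=
  limsup_logRate_le_and_liminf_logRate_le (lebN_antitone f U) (lebN_antitone f V)
    (lebN_pos hU hf) fun n => (h.covSeq f n).leb_le

lemma eventually_hLplus_le_and_hLminus_le [CompactSpace X] (hf : Continuous f)
    {U : ℕ → Set (Set X)} (hU : ∀ k, IsOpenCover (U k))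
    (hdiam : Tendsto (fun k => covDiam (U k)) atTop (𝓝 0)) (hV : IsOpenCover V) :
    ∀ᶠ k in atTop, hLplus f V ≤ hLplus f (U k) ∧ hLminus f V ≤ hLminus f (U k) := by
  rcases isEmpty_or_nonempty X with hX | hX
  · have hzero : ∀ W : Set (Set X), logRate (lebN f W) = fun _ => 0 := fun W =>
      logRate_of_forall_eq_top (lebN_of_isEmpty f W)
    exact Eventually.of_forall fun k => by
      simp only [hLplus, hLminus, ← logRate.eq_def, hzero, le_rfl, and_self]
  filter_upwards [hdiam.eventually_lt_const (leb_pos hV)] with k hk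
  exact hLplus_le_and_hLminus_le_of_refines hf (hU k) (refines_of_covDiam_lt_leb hk)

end LebesgueEntropy

theorem tendsto_biSup_of_eventually_le {ι α β : Type*} [CompleteLinearOrder α]
    [TopologicalSpace α] [OrderTopology α] {l : Filter β} {p : ι → Prop} (s : ι → α)
    {u : β → ι} (hu : ∀ k, p (u k)) (h : ∀ i, p i → ∀ᶠ k in l, s i ≤ s (u k)) :
    Tendsto (fun k => s (u k)) l (𝓝 (⨆ (i) (_ : p i), s i)) :=
  tendsto_of_le_liminf_of_limsup_le (iSup₂_le fun i hi => le_liminf_of_le (h := h i hi))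
    (limsup_le_of_le (h := Eventually.of_forall fun k => le_iSup₂_of_le (u k) (hu k) le_rfl))

/-- If `diam(U_k) → 0` then `h_L^±(f,U_k) → h_L^±(f)`. -/
theorem hL_tendsto_of_covDiam_tendsto_zero {X : Type*} [MetricSpace X] [CompactSpace X]
    (f : X → X) (hf : Continuous f) (U : ℕ → Set (Set X))
    (hU : ∀ k, IsOpenCover (U k)) (hUfin : ∀ k, (U k).Finite)
    (hdiam : Filter.Tendsto (fun k => covDiam (U k)) Filter.atTop (nhds (0 : ℝ≥0∞))) :
    Filter.Tendsto (fun k => hLplus f (U k)) Filter.atTop (nhds (hLplusSup f)) ∧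
    Filter.Tendsto (fun k => hLminus f (U k)) Filter.atTop (nhds (hLminusSup f)) := by
  have hUk : ∀ k, IsOpenCover (U k) ∧ (U k).Finite := fun k => ⟨hU k, hUfin k⟩
  have hle := fun V (hV : IsOpenCover V ∧ V.Finite) =>
    eventually_hLplus_le_and_hLminus_le hf hU hdiam hV.1
  exact ⟨tendsto_biSup_of_eventually_le (hLplus f) hUk fun V hV =>
      (hle V hV).mono fun _ => And.left,
    tendsto_biSup_of_eventually_le (hLminus f) hUk fun V hV =>
      (hle V hV).mono fun _ => And.right⟩
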